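/- Let N be a number field, Galois over ℚ, with Galois group isomorphic to S₄. Let K ⊆ N be a subfield with [K:ℚ] = 4 whose normal closure over ℚ (inside N) is all of N, and let L ⊆ N be a subfield that is Galois over ℚ with [L:ℚ] = 6. Then the absolute discriminants of K and L agree modulo squares: there exists a nonzero rational number q with disc(K) = q² · disc(L) in ℚ. Equivalently, ℚ(√disc(K)) = ℚ(√disc(L)) is the unique quadratic subfield of N. -/

import Mathlib

open IntermediateField Module Matrix

set_option linter.unusedSectionVars false
set_option maxHeartbeats 1000000
set_option synthInstance.maxHeartbeats 400000

/-- A fixed-point-free involutive permutation of a type of cardinality `6` is odd. -/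
lemma sign_of_orderTwo_free {α : Type*} [Fintype α] [DecidableEq α] (π : Equiv.Perm α)
    (h2 : orderOf π = 2) (hfree : ∀ x, π x ≠ x) (hcard : Fintype.card α = 6) :
    Equiv.Perm.sign π = -1 := by
  have hall : ∀ n ∈ π.cycleType, n = 2 := by
    intro n hn
    have hd : n ∣ 2 := h2 ▸ Equiv.Perm.dvd_of_mem_cycleType hn
    have h2n := Equiv.Perm.two_le_of_mem_cycleType hn
    have := Nat.le_of_dvd (by norm_num) hd
    omega
  have hsupp : π.support = Finset.univ :=
    Finset.eq_univ_iff_forall.2 fun x => Equiv.Perm.mem_support.2 (hfree x)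
  have hsum : π.cycleType.sum = 6 := by
    rw [Equiv.Perm.sum_cycleType, hsupp, Finset.card_univ, hcard]
  have hrep : π.cycleType = Multiset.replicate (Multiset.card π.cycleType) 2 :=
    Multiset.eq_replicate.2 ⟨rfl, hall⟩
  have hcard3 : Multiset.card π.cycleType = 3 := by
    rw [hrep, Multiset.sum_replicate, smul_eq_mul] at hsum
    omega
  rw [Equiv.Perm.sign_of_cycleType, hsum, hcard3]
  exact Odd.neg_one_pow ⟨4, by norm_num⟩

/-- Two `ℚ`-bases of a finite extension of `ℚ` have discriminants agreeing modulo squares. -/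
lemma discr_basis_sq {K : Type*} [Field K] [Algebra ℚ K] [FiniteDimensional ℚ K]
    {ι ι' : Type*} [Fintype ι] [Fintype ι'] [DecidableEq ι] [DecidableEq ι']
    (b : Basis ι ℚ K) (b' : Basis ι' ℚ K) :
    ∃ d : ℚ, d ≠ 0 ∧ Algebra.discr ℚ b = d ^ 2 * Algebra.discr ℚ b' := by
  classical
  let c : Basis ι ℚ K := b'.reindex (b'.indexEquiv b)
  have h1 : Algebra.discr ℚ (⇑c) = Algebra.discr ℚ (⇑b') := by
    rw [Basis.coe_reindex]
    exact Algebra.discr_reindex ℚ b' (b'.indexEquiv b)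
  have h2 : (⇑b) = (⇑c) ᵥ* ((c.toMatrix b).map (algebraMap ℚ K)) :=
    (c.toMatrix_map_vecMul b).symm
  have hdet : (c.toMatrix b).det ≠ 0 := by
    intro h0
    have := Basis.toMatrix_mul_toMatrix_flip c b
    have h1' := congrArg Matrix.det this
    rw [Matrix.det_mul, h0, zero_mul, Matrix.det_one] at h1'
    norm_num at h1'
  refine ⟨(c.toMatrix b).det, hdet, ?_⟩
  calc Algebra.discr ℚ (⇑b)
      = Algebra.discr ℚ ((⇑c) ᵥ* ((c.toMatrix b).map (algebraMap ℚ K))) := by rw [← h2]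
    _ = (c.toMatrix b).det ^ 2 * Algebra.discr ℚ (⇑c) :=
        Algebra.discr_of_matrix_vecMul (⇑c) (c.toMatrix b)
    _ = (c.toMatrix b).det ^ 2 * Algebra.discr ℚ (⇑b') := by rw [h1]

section Aux

variable {N : Type*} [Field N] [NumberField N] [IsGalois ℚ N]

/-- The action of the Galois group of `N/ℚ` on the `ℚ`-embeddings of a subfield `K ⊆ N`. -/
def embAction (K : IntermediateField ℚ N) :
    (N ≃ₐ[ℚ] N) →* Equiv.Perm (K →ₐ[ℚ] N) :=
  MonoidHom.mk' (fun g =>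
    { toFun := fun σ => g.toAlgHom.comp σ
      invFun := fun σ => g.symm.toAlgHom.comp σ
      left_inv := fun σ => by ext x; simp
      right_inv := fun σ => by ext x; simp })
    (fun g h => by ext σ x; simp)

@[simp] lemma embAction_apply (K : IntermediateField ℚ N) (g : N ≃ₐ[ℚ] N)
    (σ : K →ₐ[ℚ] N) (x : K) : embAction K g σ x = g (σ x) := rfl

lemma card_emb (K : IntermediateField ℚ N) :
    Fintype.card (K →ₐ[ℚ] N) = finrank ℚ K := by
  apply AlgHom.card_of_splits
  intro x
  rw [show minpoly ℚ x = minpoly ℚ (algebraMap K N x) from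
    (minpoly.algebraMap_eq (algebraMap K N).injective x).symm]
  exact Normal.splits inferInstance _

/-- The image in `N` of the discriminant of a power basis of `K` is the square of the
associated Vandermonde determinant. -/
lemma delta_sq (K : IntermediateField ℚ N) (pb : PowerBasis ℚ K)
    (e : Fin pb.dim ≃ (K →ₐ[ℚ] N)) :
    algebraMap ℚ N (Algebra.discr ℚ pb.basis)
      = (Matrix.vandermonde fun i => e i pb.gen).det ^ 2 := by
  classical
  set E := AlgebraicClosure ℚ
  let j : N →ₐ[ℚ] E := IsAlgClosed.lift
  have hinj : Function.Injective (fun σ : K →ₐ[ℚ] N => j.comp σ) := by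
    intro a b hab
    ext x
    exact j.injective (congrArg (fun f : K →ₐ[ℚ] E => f x) hab)
  have hcard : Fintype.card (K →ₐ[ℚ] N) = Fintype.card (K →ₐ[ℚ] E) := by
    rw [card_emb, AlgHom.card]
  have hbij : Function.Bijective (fun σ : K →ₐ[ℚ] N => j.comp σ) :=
    (Fintype.bijective_iff_injective_and_card _).2 ⟨hinj, hcard⟩
  let e' : Fin pb.dim ≃ (K →ₐ[ℚ] E) := e.trans (Equiv.ofBijective _ hbij)
  have h := Algebra.discr_powerBasis_eq_prod ℚ E pb e'
  have he' : ∀ i, e' i pb.gen = j (e i pb.gen) := fun i => rfl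
  have hL : algebraMap ℚ E (Algebra.discr ℚ pb.basis)
      = j (algebraMap ℚ N (Algebra.discr ℚ pb.basis)) := (j.commutes _).symm
  rw [hL] at h
  have hR : (∏ i : Fin pb.dim, ∏ k ∈ Finset.Ioi i, (e' k pb.gen - e' i pb.gen) ^ 2)
      = j ((Matrix.vandermonde fun i => e i pb.gen).det ^ 2) := by
    rw [Matrix.det_vandermonde]
    push_cast [map_pow, map_prod, map_sub, he']
    rw [← Finset.prod_pow]
    refine Finset.prod_congr rfl fun i _ => ?_
    rw [← Finset.prod_pow]
  rw [hR] at h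
  exact j.injective h

/-- The Galois group acts on the Vandermonde determinant by the sign of the induced
permutation of embeddings. -/
lemma delta_conj (K : IntermediateField ℚ N) (pb : PowerBasis ℚ K)
    (e : Fin pb.dim ≃ (K →ₐ[ℚ] N)) [DecidableEq (K →ₐ[ℚ] N)] (g : N ≃ₐ[ℚ] N) :
    g (Matrix.vandermonde fun i => e i pb.gen).det
      = ((Equiv.Perm.sign (embAction K g) : ℤ) : N)
          * (Matrix.vandermonde fun i => e i pb.gen).det := by
  classical
  set v : Fin pb.dim → N := fun i => e i pb.gen with hv
  let π : Equiv.Perm (Fin pb.dim) := e.permCongr.symm (embAction K g)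
  have hπ : ∀ i, e (π i) = embAction K g (e i) := by
    intro i
    simp [π, Equiv.permCongr_symm, Equiv.permCongr_apply]
  have h1 : g (Matrix.vandermonde v).det = ((Matrix.vandermonde v).map g).det := by
    exact RingHom.map_det (g : N →+* N) _
  have h2 : (Matrix.vandermonde v).map g = (Matrix.vandermonde v).submatrix π id := by
    ext i k
    simp only [Matrix.map_apply, Matrix.vandermonde_apply, Matrix.submatrix_apply, id]
    rw [map_pow]
    congr 1
    have := hπ i
    calc g (v i) = (embAction K g (e i)) pb.gen := rfl
      _ = (e (π i)) pb.gen := by rw [this]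
  have h3 : Equiv.Perm.sign π = Equiv.Perm.sign (embAction K g) := by
    rw [show π = e.symm.permCongr (embAction K g) by rw [← Equiv.permCongr_symm]]
    exact Equiv.Perm.sign_permCongr _ _
  rw [h1, h2, Matrix.det_permute, h3]

/-- For `L/ℚ` Galois of degree `6` inside `N` there is an element of the Galois group acting
as an odd permutation on the embeddings of `L`. -/
lemma exists_sign_neg_L (L : IntermediateField ℚ N) [DecidableEq (L →ₐ[ℚ] N)]
    (hL : IsGalois ℚ L) (hLdeg : finrank ℚ L = 6) :
    ∃ g : N ≃ₐ[ℚ] N, Equiv.Perm.sign (embAction L g) = -1 := by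
  classical
  haveI := hL
  let E6 := Normal.algHomEquivAut ℚ N (L : IntermediateField ℚ N)
  have hE6 : ∀ (σ : L →ₐ[ℚ] N) (x : L), algebraMap L N (E6 σ x) = σ x := by
    intro σ x
    have := AlgHom.restrictNormal_commutes σ L x
    simpa [E6, Normal.algHomEquivAut, AlgHom.restrictNormal'] using this
  have hcomm : ∀ (g : N ≃ₐ[ℚ] N) (σ : L →ₐ[ℚ] N),
      E6 (embAction L g σ) = (AlgEquiv.restrictNormalHom L g) * (E6 σ) := by
    intro g σ
    apply AlgEquiv.ext
    intro x
    apply (algebraMap L N).injective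
    rw [hE6]
    have h2 : algebraMap L N ((AlgEquiv.restrictNormalHom L g) (E6 σ x))
        = g (algebraMap L N (E6 σ x)) := by
      exact AlgEquiv.restrictNormal_commutes g L (E6 σ x)
    calc (embAction L g σ) x = g (σ x) := rfl
      _ = g (algebraMap L N (E6 σ x)) := by rw [hE6]
      _ = algebraMap L N ((AlgEquiv.restrictNormalHom L g) (E6 σ x)) := h2.symm
      _ = algebraMap L N (((AlgEquiv.restrictNormalHom L g) * (E6 σ)) x) := rfl
  have hQ : Fintype.card (L ≃ₐ[ℚ] L) = 6 := by
    rw [Fintype.card_eq_nat_card, IsGalois.card_aut_eq_finrank]; exact hLdeg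
  haveI : Fact (Nat.Prime 2) := ⟨Nat.prime_two⟩
  obtain ⟨q, hq⟩ := exists_prime_orderOf_dvd_card (G := L ≃ₐ[ℚ] L) 2 (by rw [hQ]; norm_num)
  obtain ⟨g, hg⟩ := AlgEquiv.restrictNormalHom_surjective (F := ℚ) (K₁ := ↥L) (E := N) q
  refine ⟨g, ?_⟩
  have hperm : E6.permCongr (embAction L g)
      = MulAction.toPermHom (L ≃ₐ[ℚ] L) (L ≃ₐ[ℚ] L) q := by
    apply Equiv.ext
    intro p
    have : E6.permCongr (embAction L g) p = E6 (embAction L g (E6.symm p)) := rfl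
    rw [this, hcomm, Equiv.apply_symm_apply, hg]
    rfl
  have hsign : Equiv.Perm.sign (E6.permCongr (embAction L g))
      = Equiv.Perm.sign (embAction L g) := Equiv.Perm.sign_permCongr E6 _
  rw [← hsign, hperm]
  apply sign_of_orderTwo_free
  · rw [orderOf_injective (MulAction.toPermHom (L ≃ₐ[ℚ] L) (L ≃ₐ[ℚ] L))
      MulAction.toPerm_injective q]
    exact hq
  · intro p
    have hq1 : q ≠ 1 := by
      intro h; rw [h, orderOf_one] at hq; norm_num at hq
    simpa [MulAction.toPermHom, mul_eq_right] using hq1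
  · exact hQ

/-- For `K` of degree `4` with normal closure `N` (of Galois group of order `24`), some element
of the Galois group acts as an odd permutation on the embeddings of `K`. -/
lemma exists_sign_neg_K (K : IntermediateField ℚ N) [DecidableEq (K →ₐ[ℚ] N)]
    (hK : finrank ℚ K = 4) (hKclosure : normalClosure ℚ K N = ⊤)
    (hcardG : Fintype.card (N ≃ₐ[ℚ] N) = 24) :
    ∃ g : N ≃ₐ[ℚ] N, Equiv.Perm.sign (embAction K g) = -1 := by
  classical
  have hker : ∀ g : N ≃ₐ[ℚ] N, embAction K g = 1 → g = 1 := by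
    intro g hg
    have hfix : ∀ σ : K →ₐ[ℚ] N,
        σ.fieldRange ≤ IntermediateField.fixedField (Subgroup.zpowers g) := by
      intro σ
      rw [IntermediateField.le_iff_le, Subgroup.zpowers_le,
        IntermediateField.mem_fixingSubgroup_iff]
      rintro x ⟨y, rfl⟩
      have := congrArg (fun p : Equiv.Perm (K →ₐ[ℚ] N) => p σ y) hg
      simpa using this
    have htop : (⊤ : IntermediateField ℚ N)
        ≤ IntermediateField.fixedField (Subgroup.zpowers g) := by
      rw [← hKclosure]
      exact normalClosure_le_iff.2 hfix
    have h2 := (IntermediateField.le_iff_le _ _).1 htop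
    rw [IntermediateField.fixingSubgroup_top] at h2
    have := h2 (Subgroup.mem_zpowers g)
    simpa [Subgroup.mem_bot] using this
  have hinj : Function.Injective (embAction K) :=
    (injective_iff_map_eq_one (embAction K)).2 hker
  have hcards : Fintype.card (N ≃ₐ[ℚ] N) = Fintype.card (Equiv.Perm (K →ₐ[ℚ] N)) := by
    rw [hcardG, Fintype.card_perm, card_emb, hK]
    norm_num [Nat.factorial]
  have hbij : Function.Bijective (embAction K) :=
    (Fintype.bijective_iff_injective_and_card _).2 ⟨hinj, hcards⟩
  haveI : Nontrivial (K →ₐ[ℚ] N) := by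
    apply Fintype.one_lt_card_iff_nontrivial.mp
    rw [card_emb, hK]; norm_num
  obtain ⟨σ, τ, hστ⟩ := exists_pair_ne (K →ₐ[ℚ] N)
  obtain ⟨g, hg⟩ := hbij.2 (Equiv.swap σ τ)
  exact ⟨g, by rw [hg, Equiv.Perm.sign_swap hστ]⟩

end Aux

/-- Let `N` be a number field, Galois over `ℚ` with Galois group isomorphic to `S₄`.  If
`K ⊆ N` has degree `4` over `ℚ` and normal closure (inside `N`) equal to `N`, and
`L ⊆ N` is Galois over `ℚ` of degree `6`, then the absolute discriminants of `K` and `L`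
agree modulo squares in `ℚ`. -/
theorem discr_eq_mod_squares_of_s4_quartic
    (N : Type*) [Field N] [NumberField N] [IsGalois ℚ N]
    (hG : Nonempty ((N ≃ₐ[ℚ] N) ≃* Equiv.Perm (Fin 4)))
    (K L : IntermediateField ℚ N)
    (hK : Module.finrank ℚ K = 4)
    (hKclosure : normalClosure ℚ K N = ⊤)
    (hL : IsGalois ℚ L) (hLdeg : Module.finrank ℚ L = 6) :
    ∃ q : ℚ, q ≠ 0 ∧
      (NumberField.discr K : ℚ) = q ^ 2 * (NumberField.discr L : ℚ) := by
  classical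
  obtain ⟨f⟩ := hG
  haveI := hL
  have hcardG : Fintype.card (N ≃ₐ[ℚ] N) = 24 := by
    rw [Fintype.card_congr f.toEquiv, Fintype.card_perm, Fintype.card_fin]
    norm_num [Nat.factorial]
  let pbK : PowerBasis ℚ K := Field.powerBasisOfFiniteOfSeparable ℚ K
  let pbL : PowerBasis ℚ L := Field.powerBasisOfFiniteOfSeparable ℚ L
  have cK : Fintype.card (K →ₐ[ℚ] N) = pbK.dim := by rw [card_emb, ← pbK.finrank]
  have cL : Fintype.card (L →ₐ[ℚ] N) = pbL.dim := by rw [card_emb, ← pbL.finrank]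
  let eK : Fin pbK.dim ≃ (K →ₐ[ℚ] N) := (Fintype.equivFinOfCardEq cK).symm
  let eL : Fin pbL.dim ≃ (L →ₐ[ℚ] N) := (Fintype.equivFinOfCardEq cL).symm
  set δK := (Matrix.vandermonde fun i => eK i pbK.gen).det with hδK
  set δL := (Matrix.vandermonde fun i => eL i pbL.gen).det with hδL
  have hKsq : algebraMap ℚ N (Algebra.discr ℚ pbK.basis) = δK ^ 2 := by
    rw [hδK]; exact delta_sq K pbK eK
  have hLsq : algebraMap ℚ N (Algebra.discr ℚ pbL.basis) = δL ^ 2 := by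
    rw [hδL]; exact delta_sq L pbL eL
  have hconjK : ∀ g : N ≃ₐ[ℚ] N,
      g δK = ((Equiv.Perm.sign (embAction K g) : ℤ) : N) * δK := by
    intro g; rw [hδK]; exact delta_conj K pbK eK g
  have hconjL : ∀ g : N ≃ₐ[ℚ] N,
      g δL = ((Equiv.Perm.sign (embAction L g) : ℤ) : N) * δL := by
    intro g; rw [hδL]; exact delta_conj L pbL eL g
  have hchar : ∀ g : N ≃ₐ[ℚ] N,
      Equiv.Perm.sign (embAction K g) = Equiv.Perm.sign (embAction L g) := by
    obtain ⟨gK, hgK⟩ := exists_sign_neg_K K hK hKclosure hcardG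
    obtain ⟨gL, hgL⟩ := exists_sign_neg_L L hL hLdeg
    let sK : Equiv.Perm (Fin 4) →* ℤˣ :=
      (Equiv.Perm.sign.comp (embAction K)).comp f.symm.toMonoidHom
    let sL : Equiv.Perm (Fin 4) →* ℤˣ :=
      (Equiv.Perm.sign.comp (embAction L)).comp f.symm.toMonoidHom
    have hsK : Function.Surjective sK := by
      intro u
      rcases Int.units_eq_one_or u with h | h
      · exact ⟨1, by simp [sK, h]⟩
      · exact ⟨f gK, by simp [sK, h, hgK]⟩
    have hsL : Function.Surjective sL := by
      intro u
      rcases Int.units_eq_one_or u with h | h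
      · exact ⟨1, by simp [sL, h]⟩
      · exact ⟨f gL, by simp [sL, h, hgL]⟩
    have h1 := Equiv.Perm.eq_sign_of_surjective_hom hsK
    have h2 := Equiv.Perm.eq_sign_of_surjective_hom hsL
    intro g
    have e1 : sK (f g) = Equiv.Perm.sign (embAction K g) := by simp [sK]
    have e2 : sL (f g) = Equiv.Perm.sign (embAction L g) := by simp [sL]
    rw [← e1, ← e2, h1, h2]
  have hfix : ∀ g : N ≃ₐ[ℚ] N, g (δK * δL) = δK * δL := by
    intro g
    rw [_root_.map_mul, hconjK g, hconjL g, hchar g, mul_mul_mul_comm]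
    have hu : ((Equiv.Perm.sign (embAction L g) : ℤ) : N)
        * ((Equiv.Perm.sign (embAction L g) : ℤ) : N) = 1 := by
      rw [← Int.cast_mul, ← Units.val_mul, Int.units_mul_self, Units.val_one, Int.cast_one]
    rw [hu, one_mul]
  obtain ⟨c, hc⟩ : ∃ c : ℚ, algebraMap ℚ N c = δK * δL := by
    have hmem : δK * δL ∈ IntermediateField.fixedField (⊤ : Subgroup (N ≃ₐ[ℚ] N)) :=
      fun g => hfix g.1
    have hbot : IntermediateField.fixedField (⊤ : Subgroup (N ≃ₐ[ℚ] N))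
        = (⊥ : IntermediateField ℚ N) := by
      have := IsGalois.fixedField_fixingSubgroup (⊥ : IntermediateField ℚ N)
      rwa [IntermediateField.fixingSubgroup_bot] at this
    rw [hbot] at hmem
    exact IntermediateField.mem_bot.1 hmem
  set dK := Algebra.discr ℚ ⇑pbK.basis with hdKdef
  set dL := Algebra.discr ℚ ⇑pbL.basis with hdLdef
  have hdKne : dK ≠ 0 := Algebra.discr_not_zero_of_basis ℚ pbK.basis
  have hdLne : dL ≠ 0 := Algebra.discr_not_zero_of_basis ℚ pbL.basis
  have hprod : dK * dL = c ^ 2 := by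
    apply (algebraMap ℚ N).injective
    rw [_root_.map_mul, hKsq, hLsq, map_pow, hc]
    ring
  have hcne : c ≠ 0 := by
    intro h0
    rw [h0] at hprod
    have h00 : dK * dL = 0 := by simpa using hprod
    rcases mul_eq_zero.1 h00 with h | h
    exacts [hdKne h, hdLne h]
  obtain ⟨qK, hqKne, hqK⟩ := discr_basis_sq (NumberField.integralBasis K) pbK.basis
  obtain ⟨qL, hqLne, hqL⟩ := discr_basis_sq (NumberField.integralBasis L) pbL.basis
  refine ⟨qK * c / (dL * qL), ?_, ?_⟩
  · exact div_ne_zero (mul_ne_zero hqKne hcne) (mul_ne_zero hdLne hqLne)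
  · rw [NumberField.coe_discr, NumberField.coe_discr, hqK, hqL, ← hdKdef, ← hdLdef]
    have hdk : dK = c ^ 2 / dL := by
      rw [eq_div_iff hdLne]
      exact hprod
    rw [hdk]
    field_simp
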